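/- Let κ > 2, R̄ > 0, and L̄ := πR̄. (i) For every A₀ ∈ ℝ, the function μ(t,τ) := A₀·exp((2 − κ)t/R̄²) satisfies the linearised radial flow equation ∂_t μ = ∂_τ²μ + (1/R̄)cot(τ/R̄)∂_τμ + (2/R̄²)μ − (κ/(πR̄³))∫₀^{L̄} μ(t,σ) dσ for all t > 0 and τ ∈ (0, L̄). (ii) For every integer l ≥ 1 with κ ≠ l(l+1), setting I_l := ∫_{−1}^{1} P_l(y)/√(1−y²) dy and λ_l := (l(l+1)κ)/((l(l+1)−κ)π)·I_l, the function μ(t,τ) := exp((2 − l(l+1))t/R̄²)·(P_l(cos(τ/R̄)) + λ_l/(l(l+1))) satisfies the same equation for all t > 0 and τ ∈ (0, L̄). -/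

import Mathlib

/-!
Both families are separated solutions `μ(t, τ) = exp (a t / R̄²) ψ(τ)`, and since the right-hand
side of the equation is linear in `μ(t, ·)`, such a `μ` is a solution as soon as `ψ` is an
eigenfunction of the right-hand side with eigenvalue `a / R̄²`.

For a constant `ψ` the derivative terms vanish and the nonlocal term contributes `-κ ψ / R̄²`.
For `ψ(τ) = P_l(cos(τ/R̄)) + c`, the substitution `x = cos(τ/R̄)` turns
`∂_τ² + (1/R̄) cot(τ/R̄) ∂_τ` into the Legendre operator `((1 - x²) ∂_x² - 2x ∂_x) / R̄²`, of which
`P_l` is an eigenfunction with eigenvalue `-l(l+1)`; the same substitution turns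
`∫₀^{πR̄} P_l(cos(σ/R̄)) dσ` into `R̄ I_l`, and `c = λ_l / (l(l+1))` is precisely the constant for
which the nonlocal term is again proportional to `ψ`. The Legendre equation itself comes from
differentiating `(x² - 1) u' = 2n x u`, `u = (x² - 1)ⁿ`, `n + 1` times.
-/

open Real

/-- The Legendre polynomial `P_n`, defined by the Rodrigues formula
`P_n = 1/(2ⁿ n!) · dⁿ/dxⁿ (x² − 1)ⁿ`. -/
noncomputable def legendre (n : ℕ) : Polynomial ℝ :=
  ((1 : ℝ) / (2^n * n.factorial)) • (Polynomial.derivative^[n] ((Polynomial.X^2 - 1)^n))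

open Polynomial

section Rodrigues

variable {R : Type*} [CommRing R]

theorem derivative_iterate_derivative (p : R[X]) (k : ℕ) :
    derivative (derivative^[k] p) = derivative^[k + 1] p :=
  (Function.iterate_succ_apply' _ _ _).symm

theorem sq_sub_one_mul_derivative_pow (n : ℕ) :
    (X ^ 2 - 1 : R[X]) * derivative ((X ^ 2 - 1) ^ n) = 2 * (n : R[X]) * X * (X ^ 2 - 1) ^ n := by
  cases n with
  | zero => simp
  | succ n =>
    rw [derivative_pow_succ, derivative_sub, derivative_X_sq, derivative_one]
    simp only [map_add, map_natCast, map_one, map_ofNat, Nat.cast_add, Nat.cast_one]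
    ring

theorem iterate_derivative_sq_sub_one_mul (k : ℕ) (p : R[X]) :
    derivative^[k] ((X ^ 2 - 1) * derivative^[2] p)
      = (X ^ 2 - 1) * derivative^[k + 2] p + 2 * (k : R[X]) * X * derivative^[k + 1] p
        + (k : R[X]) * ((k : R[X]) - 1) * derivative^[k] p := by
  induction k with
  | zero => simp
  | succ k ih =>
    rw [Function.iterate_succ_apply', ih]
    simp only [derivative_add, derivative_mul, derivative_sub, derivative_X_sq, derivative_X,
      derivative_one, derivative_natCast, derivative_ofNat, derivative_iterate_derivative,
      map_ofNat, add_assoc]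
    push_cast
    ring

theorem ode_iterate_derivative_sq_sub_one_pow (n : ℕ) :
    (1 - X ^ 2) * derivative^[n + 2] ((X ^ 2 - 1) ^ n : R[X])
      - 2 * X * derivative^[n + 1] ((X ^ 2 - 1) ^ n : R[X])
      + (n : R[X]) * ((n : R[X]) + 1) * derivative^[n] ((X ^ 2 - 1) ^ n : R[X]) = 0 := by
  set u : R[X] := (X ^ 2 - 1) ^ n
  have h1 := congrArg derivative (sq_sub_one_mul_derivative_pow (R := R) n)
  simp only [derivative_mul, derivative_sub, derivative_X_sq, derivative_X, derivative_one,
    derivative_natCast, derivative_ofNat, map_ofNat] at h1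
  have h2 : (X ^ 2 - 1) * derivative^[2] u + C (2 - 2 * n : R) * (derivative u * X)
      - C (2 * n : R) * u = 0 := by
    simp only [Function.iterate_succ_apply', Function.iterate_zero_apply, map_sub, map_mul,
      map_ofNat, map_natCast] at h1 ⊢
    linear_combination h1
  have h3 := congrArg (derivative^[n]) h2
  rw [iterate_derivative_sub, iterate_map_add, iterate_derivative_sq_sub_one_mul,
    iterate_derivative_C_mul, iterate_derivative_C_mul, iterate_derivative_derivative_mul_X,
    iterate_derivative_zero] at h3
  simp only [nsmul_eq_mul, map_sub, map_mul, map_ofNat, map_natCast] at h3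
  linear_combination -h3

end Rodrigues

theorem legendre_ode (n : ℕ) :
    (1 - X ^ 2) * derivative (derivative (legendre n)) - 2 * X * derivative (legendre n)
      + (n : ℝ[X]) * ((n : ℝ[X]) + 1) * legendre n = 0 := by
  rw [legendre, smul_eq_C_mul, derivative_C_mul, derivative_C_mul, derivative_iterate_derivative,
    derivative_iterate_derivative]
  linear_combination C ((1 : ℝ) / (2 ^ n * n.factorial)) *
    ode_iterate_derivative_sq_sub_one_pow (R := ℝ) n

theorem Real.cos_image_Ioo_zero_pi : cos '' Set.Ioo 0 π = Set.Ioo (-1) 1 := by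
  rw [continuous_cos.continuousOn.image_Ioo_of_strictAntiOn pi_pos.le strictAntiOn_cos,
    cos_pi, cos_zero]

theorem integral_comp_cos (f : ℝ → ℝ) :
    ∫ x in (0 : ℝ)..π, f (cos x) = ∫ y in (-1 : ℝ)..1, f y / √(1 - y ^ 2) := by
  rw [intervalIntegral.integral_of_le pi_pos.le, intervalIntegral.integral_of_le (by norm_num),
    MeasureTheory.integral_Ioc_eq_integral_Ioo, MeasureTheory.integral_Ioc_eq_integral_Ioo,
    ← cos_image_Ioo_zero_pi,
    MeasureTheory.integral_image_eq_integral_abs_deriv_smul measurableSet_Ioo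
      (fun x _ => (hasDerivAt_cos x).hasDerivWithinAt) (injOn_cos.mono Set.Ioo_subset_Icc_self)]
  refine MeasureTheory.setIntegral_congr_fun measurableSet_Ioo fun x hx => ?_
  have hsin : 0 < sin x := sin_pos_of_mem_Ioo hx
  rw [← sin_sq, sqrt_sq hsin.le, abs_neg, abs_of_pos hsin, smul_eq_mul]
  field_simp

theorem hasDerivAt_exp_mul_div (a c t : ℝ) :
    HasDerivAt (fun s => exp (a * s / c)) (a / c * exp (a * t / c)) t := by
  simpa [mul_comm] using (((hasDerivAt_id t).const_mul a).div_const c).exp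

section RadialOperator

variable (Rbar : ℝ)

/-- The Laplace–Beltrami operator of the round sphere of radius `Rbar`, on functions of the polar
arclength `τ`. -/
noncomputable def zonalLaplacian (ψ : ℝ → ℝ) (τ : ℝ) : ℝ :=
  deriv (deriv ψ) τ + (1 / Rbar) * cot (τ / Rbar) * deriv ψ τ

/-- `radialOperator Rbar κ (μ t) τ` is the right-hand side of the linearised flow equation. -/
noncomputable def radialOperator (κ : ℝ) (ψ : ℝ → ℝ) (τ : ℝ) : ℝ :=
  zonalLaplacian Rbar ψ τ + (2 / Rbar ^ 2) * ψ τ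
    - (κ / (π * Rbar ^ 3)) * ∫ σ in (0 : ℝ)..π * Rbar, ψ σ

variable {Rbar}

theorem zonalLaplacian_const_mul (a : ℝ) (ψ : ℝ → ℝ) (τ : ℝ) :
    zonalLaplacian Rbar (fun σ => a * ψ σ) τ = a * zonalLaplacian Rbar ψ τ := by
  simp only [zonalLaplacian, deriv_const_mul_field']
  ring

theorem zonalLaplacian_add_const (ψ : ℝ → ℝ) (c τ : ℝ) :
    zonalLaplacian Rbar (fun σ => ψ σ + c) τ = zonalLaplacian Rbar ψ τ := by
  simp only [zonalLaplacian, deriv_add_const']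

theorem zonalLaplacian_const (c τ : ℝ) : zonalLaplacian Rbar (fun _ => c) τ = 0 := by
  simp [zonalLaplacian]

theorem zonalLaplacian_eval_cos (p : ℝ[X]) {τ : ℝ} (hsin : sin (τ / Rbar) ≠ 0) :
    zonalLaplacian Rbar (fun σ => p.eval (cos (σ / Rbar))) τ
      = ((1 - cos (τ / Rbar) ^ 2) * (derivative (derivative p)).eval (cos (τ / Rbar))
        - 2 * cos (τ / Rbar) * (derivative p).eval (cos (τ / Rbar))) / Rbar ^ 2 := by
  have hR : Rbar ≠ 0 := by rintro rfl; simp at hsin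
  have hdiv : ∀ σ, HasDerivAt (fun σ => σ / Rbar) (1 / Rbar) σ := fun σ => by
    simpa using (hasDerivAt_id σ).div_const Rbar
  have heval : ∀ (q : ℝ[X]) σ, HasDerivAt (fun σ => q.eval (cos (σ / Rbar)))
      ((derivative q).eval (cos (σ / Rbar)) * (-sin (σ / Rbar) * (1 / Rbar))) σ :=
    fun q σ => (q.hasDerivAt _).comp σ (hdiv σ).cos
  have hderiv : deriv (fun σ => p.eval (cos (σ / Rbar)))
      = fun σ => (derivative p).eval (cos (σ / Rbar)) * (-sin (σ / Rbar) * (1 / Rbar)) :=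
    funext fun σ => (heval p σ).deriv
  have hderiv2 : HasDerivAt
      (fun σ => (derivative p).eval (cos (σ / Rbar)) * (-sin (σ / Rbar) * (1 / Rbar)))
      ((derivative (derivative p)).eval (cos (τ / Rbar)) * (-sin (τ / Rbar) * (1 / Rbar))
          * (-sin (τ / Rbar) * (1 / Rbar))
        + (derivative p).eval (cos (τ / Rbar)) * (-(cos (τ / Rbar) * (1 / Rbar)) * (1 / Rbar)))
      τ :=
    (heval (derivative p) τ).mul ((hdiv τ).sin.neg.mul_const (1 / Rbar))
  rw [zonalLaplacian, hderiv, hderiv2.deriv, cot_eq_cos_div_sin]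
  field_simp
  linear_combination (derivative (derivative p)).eval (cos (τ / Rbar)) * sin_sq_add_cos_sq (τ / Rbar)

theorem radialOperator_const_mul (κ a : ℝ) (ψ : ℝ → ℝ) (τ : ℝ) :
    radialOperator Rbar κ (fun σ => a * ψ σ) τ = a * radialOperator Rbar κ ψ τ := by
  simp only [radialOperator, zonalLaplacian_const_mul, intervalIntegral.integral_const_mul]
  ring

theorem radialOperator_const (hR : Rbar ≠ 0) (κ c τ : ℝ) :
    radialOperator Rbar κ (fun _ => c) τ = (2 - κ) / Rbar ^ 2 * c := by
  simp only [radialOperator, zonalLaplacian_const, intervalIntegral.integral_const, sub_zero,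
    smul_eq_mul]
  field_simp
  ring

theorem deriv_exp_mul_eq_radialOperator_of_eigen {κ a : ℝ} {ψ : ℝ → ℝ} {τ : ℝ}
    (h : radialOperator Rbar κ ψ τ = a / Rbar ^ 2 * ψ τ) (t : ℝ) :
    deriv (fun s => exp (a * s / Rbar ^ 2) * ψ τ) t
      = radialOperator Rbar κ (fun σ => exp (a * t / Rbar ^ 2) * ψ σ) τ := by
  rw [radialOperator_const_mul, h, ((hasDerivAt_exp_mul_div a _ t).mul_const _).deriv]
  ring

theorem radialOperator_legendre_add_const {κ c τ : ℝ} {n : ℕ} (hsin : sin (τ / Rbar) ≠ 0)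
    (hc : c * (n * (n + 1) - κ) * π
      = κ * ∫ y in (-1 : ℝ)..1, (legendre n).eval y / √(1 - y ^ 2)) :
    radialOperator Rbar κ (fun σ => (legendre n).eval (cos (σ / Rbar)) + c) τ
      = (2 - n * (n + 1)) / Rbar ^ 2 * ((legendre n).eval (cos (τ / Rbar)) + c) := by
  have hR : Rbar ≠ 0 := by rintro rfl; simp at hsin
  have hode := congrArg (eval (cos (τ / Rbar))) (legendre_ode n)
  simp only [eval_add, eval_sub, eval_mul, eval_pow, eval_X, eval_one, eval_ofNat, eval_natCast,
    eval_zero] at hode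
  have hcont : Continuous fun σ => (legendre n).eval (cos (σ / Rbar)) := by fun_prop
  have hint : ∫ σ in (0 : ℝ)..π * Rbar, ((legendre n).eval (cos (σ / Rbar)) + c)
      = Rbar * (∫ y in (-1 : ℝ)..1, (legendre n).eval y / √(1 - y ^ 2)) + π * Rbar * c := by
    rw [intervalIntegral.integral_add (hcont.intervalIntegrable _ _) intervalIntegrable_const,
      intervalIntegral.integral_comp_div (fun x => (legendre n).eval (cos x)) hR, zero_div,
      mul_div_cancel_right₀ π hR, integral_comp_cos fun y => (legendre n).eval y,
      intervalIntegral.integral_const, sub_zero, smul_eq_mul, smul_eq_mul]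
  rw [radialOperator, zonalLaplacian_add_const, zonalLaplacian_eval_cos _ hsin, hint]
  field_simp
  linear_combination π * hode + hc

end RadialOperator

theorem linearised_flow_modes_general (κ Rbar : ℝ) (hRbar : 0 < Rbar) :
    let Lbar : ℝ := π * Rbar
    -- (i)
    (∀ A₀ : ℝ,
      let μ : ℝ → ℝ → ℝ := fun t _τ => A₀ * Real.exp ((2 - κ) * t / Rbar^2)
      ∀ t : ℝ, 0 < t → ∀ τ ∈ Set.Ioo 0 Lbar,
        deriv (fun s => μ s τ) t
          = deriv (deriv (μ t)) τ + (1/Rbar) * Real.cot (τ/Rbar) * deriv (μ t) τ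
            + (2/Rbar^2) * μ t τ - (κ/(π * Rbar^3)) * ∫ σ in (0:ℝ)..Lbar, μ t σ) ∧
    -- (ii)
    (∀ l : ℕ, 1 ≤ l → κ ≠ (l:ℝ) * ((l:ℝ) + 1) →
      let I : ℝ := ∫ y in (-1:ℝ)..1, (legendre l).eval y / Real.sqrt (1 - y^2)
      let lam : ℝ := ((l:ℝ) * ((l:ℝ) + 1) * κ) / (((l:ℝ) * ((l:ℝ) + 1) - κ) * π) * I
      let μ : ℝ → ℝ → ℝ := fun t τ =>
        Real.exp ((2 - (l:ℝ) * ((l:ℝ) + 1)) * t / Rbar^2) *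
          ((legendre l).eval (Real.cos (τ/Rbar)) + lam / ((l:ℝ) * ((l:ℝ) + 1)))
      ∀ t : ℝ, 0 < t → ∀ τ ∈ Set.Ioo 0 Lbar,
        deriv (fun s => μ s τ) t
          = deriv (deriv (μ t)) τ + (1/Rbar) * Real.cot (τ/Rbar) * deriv (μ t) τ
            + (2/Rbar^2) * μ t τ - (κ/(π * Rbar^3)) * ∫ σ in (0:ℝ)..Lbar, μ t σ) := by
  intro Lbar
  constructor
  · intro A₀ μ t _ τ _
    calc deriv (fun s => μ s τ) t = (2 - κ) / Rbar ^ 2 * (A₀ * exp ((2 - κ) * t / Rbar ^ 2)) := by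
          rw [((hasDerivAt_exp_mul_div _ _ t).const_mul A₀).deriv]
          ring
      _ = radialOperator Rbar κ (μ t) τ := (radialOperator_const hRbar.ne' κ _ τ).symm
  · intro l hl hκl I lam μ t _ τ hτ
    have hsin : sin (τ / Rbar) ≠ 0 :=
      (sin_pos_of_mem_Ioo ⟨div_pos hτ.1 hRbar, (div_lt_iff₀ hRbar).2 hτ.2⟩).ne'
    have hl0 : (l : ℝ) * (l + 1) ≠ 0 := by positivity
    have hc : lam / (l * (l + 1)) * (l * (l + 1) - κ) * π = κ * I := by
      simp only [lam]
      field_simp [sub_ne_zero.2 hκl.symm]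
    exact deriv_exp_mul_eq_radialOperator_of_eigen (radialOperator_legendre_add_const hsin hc) t

/-- Explicit solutions of the linearised radial flow equation
`∂_t μ = ∂_τ²μ + (1/R̄)cot(τ/R̄)∂_τμ + (2/R̄²)μ − (κ/(πR̄³))∫₀^{L̄} μ(t,σ)dσ`, `L̄ = πR̄`:
(i) `μ(t,τ) = A₀·exp((2 − κ)t/R̄²)` for any `A₀`;
(ii) `μ(t,τ) = exp((2 − l(l+1))t/R̄²)·(P_l(cos(τ/R̄)) + λ_l/(l(l+1)))` for any integer
`l ≥ 1` with `κ ≠ l(l+1)`, where `λ_l := (l(l+1)κ)/((l(l+1)−κ)π)·∫_{−1}^{1}P_l(y)/√(1−y²)dy`. -/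
theorem linearised_flow_modes (κ Rbar : ℝ) (hκ : 2 < κ) (hRbar : 0 < Rbar) :
    let Lbar : ℝ := π * Rbar
    -- (i)
    (∀ A₀ : ℝ,
      let μ : ℝ → ℝ → ℝ := fun t _τ => A₀ * Real.exp ((2 - κ) * t / Rbar^2)
      ∀ t : ℝ, 0 < t → ∀ τ ∈ Set.Ioo 0 Lbar,
        deriv (fun s => μ s τ) t
          = deriv (deriv (μ t)) τ + (1/Rbar) * Real.cot (τ/Rbar) * deriv (μ t) τ
            + (2/Rbar^2) * μ t τ - (κ/(π * Rbar^3)) * ∫ σ in (0:ℝ)..Lbar, μ t σ) ∧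
    -- (ii)
    (∀ l : ℕ, 1 ≤ l → κ ≠ (l:ℝ) * ((l:ℝ) + 1) →
      let I : ℝ := ∫ y in (-1:ℝ)..1, (legendre l).eval y / Real.sqrt (1 - y^2)
      let lam : ℝ := ((l:ℝ) * ((l:ℝ) + 1) * κ) / (((l:ℝ) * ((l:ℝ) + 1) - κ) * π) * I
      let μ : ℝ → ℝ → ℝ := fun t τ =>
        Real.exp ((2 - (l:ℝ) * ((l:ℝ) + 1)) * t / Rbar^2) *
          ((legendre l).eval (Real.cos (τ/Rbar)) + lam / ((l:ℝ) * ((l:ℝ) + 1)))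
      ∀ t : ℝ, 0 < t → ∀ τ ∈ Set.Ioo 0 Lbar,
        deriv (fun s => μ s τ) t
          = deriv (deriv (μ t)) τ + (1/Rbar) * Real.cot (τ/Rbar) * deriv (μ t) τ
            + (2/Rbar^2) * μ t τ - (κ/(π * Rbar^3)) * ∫ σ in (0:ℝ)..Lbar, μ t σ) :=
  linearised_flow_modes_general κ Rbar hRbar
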